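/- (Lemma 1) Let B ≥ 1 and let O be a duplicate-free list of products with |O| ≤ B that maximizes f among all duplicate-free lists of length at most B. Then for every ρ ∈ [0,1] there exists a duplicate-free list Q with |Q| ≤ B such that every position t of Q has reachability Θ_t = Π_{j<t} θ_{q_j} ≥ ρ and f(Q) ≥ (1 − ρ) f(O). Moreover Q can be taken to be a prefix of O. -/
import Mathlib

/-- MNL expected revenue of a finite set `S` of products, where product `i`
has revenue `α i` and preference weight `β i`. -/
noncomputable def g (α β : ℕ → ℝ) (S : Finset ℕ) : ℝ :=
  (∑ i ∈ S, α i * β i) / ((∑ i ∈ S, β i) + 1)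

/-- Reachability of (0-based) position `t` of the sequence `S` under the
cascade browse model: the product of the continuation probabilities of all
earlier products. -/
noncomputable def reach (θ : ℕ → ℝ) (S : List ℕ) (t : ℕ) : ℝ :=
  ∏ j ∈ Finset.range t, θ (S.getD j 0)

/-- Expected revenue of a sequence of products `S` under the cascade browse
model combined with the MNL choice model. -/
noncomputable def f (α β θ : ℕ → ℝ) (S : List ℕ) : ℝ :=
  (∑ t ∈ Finset.range (S.length - 1),
      reach θ S t * (1 - θ (S.getD t 0)) * g α β (S.take (t + 1)).toFinset)
    + reach θ S (S.length - 1) * g α β S.toFinset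

section aux

variable {α β θ : ℕ → ℝ}

lemma g_nonneg (hα : ∀ i, 0 ≤ α i) (hβ : ∀ i, 0 ≤ β i) (S : Finset ℕ) :
    0 ≤ g α β S := by
  have h1 : (0:ℝ) ≤ ∑ i ∈ S, β i := Finset.sum_nonneg fun i _ => hβ i
  exact div_nonneg (Finset.sum_nonneg fun i _ => mul_nonneg (hα i) (hβ i)) (by linarith)

lemma g_union_le (hα : ∀ i, 0 ≤ α i) (hβ : ∀ i, 0 ≤ β i)
    {A B : Finset ℕ} (h : Disjoint A B) :
    g α β (A ∪ B) ≤ g α β A + g α β B := by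
  unfold g
  rw [Finset.sum_union h, Finset.sum_union h, add_div]
  have hAβ : (0:ℝ) ≤ ∑ i ∈ A, β i := Finset.sum_nonneg fun i _ => hβ i
  have hBβ : (0:ℝ) ≤ ∑ i ∈ B, β i := Finset.sum_nonneg fun i _ => hβ i
  have hAn : (0:ℝ) ≤ ∑ i ∈ A, α i * β i :=
    Finset.sum_nonneg fun i _ => mul_nonneg (hα i) (hβ i)
  have hBn : (0:ℝ) ≤ ∑ i ∈ B, α i * β i :=
    Finset.sum_nonneg fun i _ => mul_nonneg (hα i) (hβ i)
  exact add_le_add (div_le_div_of_nonneg_left hAn (by linarith) (by linarith))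
    (div_le_div_of_nonneg_left hBn (by linarith) (by linarith))

lemma reach_zero (θ : ℕ → ℝ) (S : List ℕ) : reach θ S 0 = 1 := by
  simp [reach]

lemma reach_succ (θ : ℕ → ℝ) (S : List ℕ) (t : ℕ) :
    reach θ S (t + 1) = reach θ S t * θ (S.getD t 0) :=
  Finset.prod_range_succ _ _

lemma reach_nonneg (hθ : ∀ i, 0 ≤ θ i ∧ θ i ≤ 1) (S : List ℕ) (t : ℕ) :
    0 ≤ reach θ S t :=
  Finset.prod_nonneg fun j _ => (hθ _).1

lemma reach_congr {S T : List ℕ} {t : ℕ}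
    (h : ∀ j < t, S.getD j 0 = T.getD j 0) : reach θ S t = reach θ T t :=
  Finset.prod_congr rfl fun j hj => by rw [h j (Finset.mem_range.mp hj)]

lemma getD_take_eq (l : List ℕ) {j t0 : ℕ} (h : j < t0) :
    (l.take t0).getD j 0 = l.getD j 0 := by
  rw [List.getD_eq_getElem?_getD, List.getD_eq_getElem?_getD, List.getElem?_take,
    if_pos h]

lemma getD_drop_eq (l : List ℕ) (t0 j : ℕ) :
    (l.drop t0).getD j 0 = l.getD (t0 + j) 0 := by
  rw [List.getD_eq_getElem?_getD, List.getD_eq_getElem?_getD, List.getElem?_drop]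

lemma reach_add (θ : ℕ → ℝ) (l : List ℕ) (t0 s : ℕ) :
    reach θ l (t0 + s) = reach θ l t0 * reach θ (l.drop t0) s := by
  unfold reach
  rw [Finset.prod_range_add]
  congr 1
  exact Finset.prod_congr rfl fun j _ => by rw [getD_drop_eq]

lemma f_nonneg (hα : ∀ i, 0 ≤ α i) (hβ : ∀ i, 0 ≤ β i)
    (hθ : ∀ i, 0 ≤ θ i ∧ θ i ≤ 1) (S : List ℕ) : 0 ≤ f α β θ S := by
  unfold f
  apply add_nonneg
  · apply Finset.sum_nonneg
    intro t _
    exact mul_nonneg (mul_nonneg (reach_nonneg hθ S t)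
      (by linarith [(hθ (S.getD t 0)).2])) (g_nonneg hα hβ _)
  · exact mul_nonneg (reach_nonneg hθ S _) (g_nonneg hα hβ _)

lemma f_split (hα : ∀ i, 0 ≤ α i) (hβ : ∀ i, 0 ≤ β i)
    (hθ : ∀ i, 0 ≤ θ i ∧ θ i ≤ 1) (O : List ℕ) (hO : O.Nodup)
    (t0 : ℕ) (h1 : 1 ≤ t0) (h2 : t0 < O.length) :
    f α β θ O ≤ f α β θ (O.take t0) + reach θ O t0 * f α β θ (O.drop t0) := by
  set k := O.length with hk
  set Q := O.take t0 with hQ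
  set R := O.drop t0 with hR
  set A : ℕ → ℝ := fun t =>
    reach θ O t * (1 - θ (O.getD t 0)) * g α β ((O.take (t + 1)).toFinset) with hA
  have hQlen : Q.length = t0 := by
    rw [hQ, List.length_take]; omega
  have hRlen : R.length = k - t0 := by rw [hR, List.length_drop]
  -- disjointness
  have hdisj : Disjoint Q.toFinset R.toFinset := by
    rw [List.disjoint_toFinset_iff_disjoint]
    exact List.disjoint_of_nodup_append (by rw [hQ, hR, List.take_append_drop]; exact hO)
  have hdisj' : ∀ m : ℕ, Disjoint Q.toFinset ((R.take m).toFinset) := by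
    intro m
    refine hdisj.mono_right ?_
    intro x hx
    rw [List.mem_toFinset] at *
    exact List.take_subset _ _ hx
  -- f Q rewritten in terms of O
  have hfQ : f α β θ Q = ∑ t ∈ Finset.range (t0 - 1), A t
      + reach θ O (t0 - 1) * g α β Q.toFinset := by
    unfold f
    rw [hQlen]
    congr 1
    · apply Finset.sum_congr rfl
      intro t ht
      rw [Finset.mem_range] at ht
      have e1 : reach θ Q t = reach θ O t :=
        reach_congr fun j hj => getD_take_eq O (by omega)
      have e2 : Q.getD t 0 = O.getD t 0 := getD_take_eq O (by omega)
      have e3 : Q.take (t + 1) = O.take (t + 1) := by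
        rw [hQ, List.take_take]; congr 1; omega
      rw [hA, e1, e2, e3]
    · congr 1
      exact reach_congr fun j hj => getD_take_eq O (by omega)
  -- f O expanded
  have hfO : f α β θ O = ∑ t ∈ Finset.range (k - 1), A t
      + reach θ O (k - 1) * g α β O.toFinset := rfl
  obtain ⟨m, rfl⟩ : ∃ m, t0 = m + 1 := ⟨t0 - 1, by omega⟩
  set n' := k - 1 - (m + 1) with hn'
  have hsplit : ∑ t ∈ Finset.range (k - 1), A t
      = ∑ t ∈ Finset.range m, A t + A m + ∑ s ∈ Finset.range n', A (m + 1 + s) := by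
    rw [← Finset.sum_range_add_sum_Ico A (show m + 1 ≤ k - 1 by omega),
      Finset.sum_Ico_eq_sum_range, Finset.sum_range_succ]
  have hAm : A m = reach θ O m * g α β Q.toFinset
      - reach θ O (m + 1) * g α β Q.toFinset := by
    rw [hA, reach_succ]
    have : (O.take (m + 1)).toFinset = Q.toFinset := by rw [hQ]
    rw [this]; ring
  -- bound on each tail term
  have e1 : ∀ s ∈ Finset.range n', A (m + 1 + s) ≤ reach θ O (m + 1) *
      ((reach θ R s - reach θ R (s + 1)) * g α β Q.toFinset
        + reach θ R s * (1 - θ (R.getD s 0)) * g α β ((R.take (s + 1)).toFinset)) := by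
    intro s hs
    rw [Finset.mem_range] at hs
    have egd : O.getD (m + 1 + s) 0 = R.getD s 0 := (getD_drop_eq O (m+1) s).symm
    have etake : O.take (m + 1 + s + 1) = Q ++ R.take (s + 1) := by
      have : m + 1 + s + 1 = (m + 1) + (s + 1) := by omega
      rw [this, List.take_add]
    have hgle : g α β ((O.take (m + 1 + s + 1)).toFinset)
        ≤ g α β Q.toFinset + g α β ((R.take (s + 1)).toFinset) := by
      rw [etake, List.toFinset_append]
      exact g_union_le hα hβ (hdisj' (s + 1))
    have hra : reach θ O (m + 1 + s) = reach θ O (m + 1) * reach θ R s :=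
      reach_add θ O (m + 1) s
    have h0 : 0 ≤ reach θ O (m + 1) := reach_nonneg hθ O _
    have h0' : 0 ≤ reach θ R s := reach_nonneg hθ R s
    have h1' : 0 ≤ 1 - θ (R.getD s 0) := by linarith [(hθ (R.getD s 0)).2]
    calc A (m + 1 + s)
        ≤ reach θ O (m + 1) * reach θ R s * (1 - θ (R.getD s 0)) *
            (g α β Q.toFinset + g α β ((R.take (s + 1)).toFinset)) := by
          simp only [hA]
          rw [hra, egd]
          exact mul_le_mul_of_nonneg_left hgle (by positivity)
      _ = reach θ O (m + 1) *
          ((reach θ R s - reach θ R (s + 1)) * g α β Q.toFinset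
            + reach θ R s * (1 - θ (R.getD s 0)) * g α β ((R.take (s + 1)).toFinset)) := by
          rw [reach_succ θ R s]; ring
  have htel : ∑ s ∈ Finset.range n', (reach θ R s - reach θ R (s + 1))
      = 1 - reach θ R n' := by
    rw [Finset.sum_range_sub' (fun s => reach θ R s), reach_zero]
  have hfinal : reach θ O (k - 1) * g α β O.toFinset
      ≤ reach θ O (m + 1) * (reach θ R n' * (g α β Q.toFinset + g α β R.toFinset)) := by
    have hk1 : k - 1 = (m + 1) + n' := by omega
    have : O.toFinset = Q.toFinset ∪ R.toFinset := by
      rw [← List.toFinset_append, hQ, hR, List.take_append_drop]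
    rw [hk1, reach_add, this, mul_assoc]
    have h0 : 0 ≤ reach θ O (m + 1) := reach_nonneg hθ O _
    have h0' : 0 ≤ reach θ R n' := reach_nonneg hθ R n'
    exact mul_le_mul_of_nonneg_left
      (mul_le_mul_of_nonneg_left (g_union_le hα hβ hdisj) h0') h0
  -- f R expanded
  have hfR : f α β θ R = ∑ s ∈ Finset.range n',
      reach θ R s * (1 - θ (R.getD s 0)) * g α β ((R.take (s + 1)).toFinset)
      + reach θ R n' * g α β R.toFinset := by
    unfold f
    have : R.length - 1 = n' := by omega
    rw [this]
  -- combine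
  have hsum_le : ∑ s ∈ Finset.range n', A (m + 1 + s)
      ≤ reach θ O (m + 1) * ((1 - reach θ R n') * g α β Q.toFinset
        + ∑ s ∈ Finset.range n',
            reach θ R s * (1 - θ (R.getD s 0)) * g α β ((R.take (s + 1)).toFinset)) := by
    calc ∑ s ∈ Finset.range n', A (m + 1 + s)
        ≤ ∑ s ∈ Finset.range n', reach θ O (m + 1) *
            ((reach θ R s - reach θ R (s + 1)) * g α β Q.toFinset
              + reach θ R s * (1 - θ (R.getD s 0)) * g α β ((R.take (s + 1)).toFinset)) :=
          Finset.sum_le_sum e1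
      _ = reach θ O (m + 1) * ((1 - reach θ R n') * g α β Q.toFinset
            + ∑ s ∈ Finset.range n',
                reach θ R s * (1 - θ (R.getD s 0)) * g α β ((R.take (s + 1)).toFinset)) := by
          rw [← Finset.mul_sum]
          congr 1
          rw [Finset.sum_add_distrib, ← Finset.sum_mul, htel]
  rw [hfO, hfQ, hsplit, hAm, hfR]
  have : (m + 1) - 1 = m := by omega
  rw [this]
  nlinarith [hsum_le, hfinal]

end aux

/-- Lemma 1: from an optimal sequence `O` one can extract a
prefix `Q` all of whose positions have reachability at least `ρ` and whose
expected revenue is at least `(1 - ρ) f(O)`. -/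
theorem stmt5 (α β θ : ℕ → ℝ) (hα : ∀ i, 0 ≤ α i) (hβ : ∀ i, 0 ≤ β i)
    (hθ : ∀ i, 0 ≤ θ i ∧ θ i ≤ 1)
    (B : ℕ) (hB : 1 ≤ B)
    (O : List ℕ) (hO : O.Nodup) (hOB : O.length ≤ B)
    (hopt : ∀ L : List ℕ, L.Nodup → L.length ≤ B → f α β θ L ≤ f α β θ O)
    (ρ : ℝ) (hρ0 : 0 ≤ ρ) (hρ1 : ρ ≤ 1) :
    ∃ Q : List ℕ, Q <+: O ∧ Q.Nodup ∧ Q.length ≤ B ∧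
      (∀ t < Q.length, ρ ≤ reach θ Q t) ∧
      (1 - ρ) * f α β θ O ≤ f α β θ Q := by
  have hfO0 : 0 ≤ f α β θ O := f_nonneg hα hβ hθ O
  by_cases hall : ∀ t < O.length, ρ ≤ reach θ O t
  · exact ⟨O, List.prefix_refl O, hO, hOB, hall, by nlinarith⟩
  · push_neg at hall
    obtain ⟨t, htlen, htρ⟩ := hall
    have hex : ∃ t, reach θ O t < ρ := ⟨t, htρ⟩
    set t0 := Nat.find hex with ht0
    have ht0spec : reach θ O t0 < ρ := Nat.find_spec hex
    have ht0min : ∀ j < t0, ρ ≤ reach θ O j := fun j hj =>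
      le_of_not_gt (Nat.find_min hex hj)
    have ht0le : t0 ≤ t := Nat.find_min' hex htρ
    have ht0k : t0 < O.length := lt_of_le_of_lt ht0le htlen
    have ht01 : 1 ≤ t0 := by
      rcases Nat.eq_zero_or_pos t0 with h | h
      · exfalso; rw [h, reach_zero] at ht0spec; linarith
      · exact h
    refine ⟨O.take t0, List.take_prefix t0 O, hO.sublist (List.take_sublist t0 O),
      le_trans (by rw [List.length_take]; omega) hOB, ?_, ?_⟩
    · intro s hs
      rw [List.length_take] at hs
      have hst0 : s < t0 := by omega
      have : reach θ (O.take t0) s = reach θ O s :=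
        reach_congr fun j hj => getD_take_eq O (by omega)
      rw [this]
      exact ht0min s hst0
    · have hsplit := f_split hα hβ hθ O hO t0 ht01 ht0k
      have hRopt : f α β θ (O.drop t0) ≤ f α β θ O :=
        hopt _ (hO.sublist (List.drop_sublist t0 O))
          (le_trans (by rw [List.length_drop]; omega) hOB)
      have hR0 : 0 ≤ f α β θ (O.drop t0) := f_nonneg hα hβ hθ _
      have h0r : 0 ≤ reach θ O t0 := reach_nonneg hθ O t0
      have : reach θ O t0 * f α β θ (O.drop t0) ≤ ρ * f α β θ O := by
        calc reach θ O t0 * f α β θ (O.drop t0)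
            ≤ ρ * f α β θ (O.drop t0) :=
              mul_le_mul_of_nonneg_right (le_of_lt ht0spec) hR0
          _ ≤ ρ * f α β θ O := mul_le_mul_of_nonneg_left hRopt hρ0
      linarith
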